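/- Let y ∈ ℝ^N, let K and K̃ be N×N real symmetric positive semidefinite matrices with ‖K̃ − K‖ ≤ Nε for some ε > 0, let σ > 0, and let α, α̃ ∈ ℝ^N solve (K + σ²I)α = y and (K̃ + σ²I)α̃ = y. (i) With μ = Kα and μ̃ = K̃α̃, we have ‖μ̃ − μ‖ / ‖y‖ ≤ (N/σ²) ε (whenever y ≠ 0). (ii) If in addition k_x, k̃_x ∈ ℝ^N satisfy ‖k_x‖ ≤ √N and ‖k̃_x − k_x‖ ≤ √N ε, then with μ(x) = k_xᵀ α and μ̃(x) = k̃_xᵀ α̃ we have |μ̃(x) − μ(x)| / (‖y‖/√N) ≤ (N²/σ⁴ + N/σ²) ε (whenever y ≠ 0). -/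

import Mathlib

/-- Operator (spectral) norm of a real square matrix, induced by the Euclidean norm. -/
noncomputable def opNorm {N : ℕ} (A : Matrix (Fin N) (Fin N) ℝ) : ℝ :=
  ‖Matrix.toEuclideanCLM (𝕜 := ℝ) A‖

/-- Euclidean norm of a vector in `ℝ^N`. -/
noncomputable def vecNorm {N : ℕ} (v : Fin N → ℝ) : ℝ :=
  Real.sqrt (∑ i, v i ^ 2)

/-!
Both systems are solved by resolvents of positive semidefinite matrices shifted by `σ²`, and such a
resolvent has norm at most `1/σ²`; in particular `‖α‖, ‖α̃‖ ≤ ‖y‖/σ²`. Subtracting the two systems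
gives `(K̃ + σ²I)(α̃ - α) = (K - K̃)α`, so `‖α̃ - α‖ ≤ ‖K̃ - K‖‖y‖/σ⁴`. Since `Kα = y - σ²α`, the
difference of the means is `σ²(α - α̃)`, which gives (i); for (ii) split
`k̃ₓᵀα̃ - kₓᵀα = (k̃ₓ - kₓ)ᵀα̃ + kₓᵀ(α̃ - α)` and apply Cauchy–Schwarz to each term.
-/

open Matrix

lemma vecNorm_eq_norm_toLp {N : ℕ} (v : Fin N → ℝ) : vecNorm v = ‖WithLp.toLp 2 v‖ := by
  simp [vecNorm, EuclideanSpace.norm_eq, sq_abs]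

lemma vecNorm_nonneg {N : ℕ} (v : Fin N → ℝ) : 0 ≤ vecNorm v := Real.sqrt_nonneg _

lemma vecNorm_smul {N : ℕ} (c : ℝ) (v : Fin N → ℝ) : vecNorm (c • v) = |c| * vecNorm v := by
  rw [vecNorm_eq_norm_toLp, vecNorm_eq_norm_toLp, WithLp.toLp_smul, norm_smul, Real.norm_eq_abs]

lemma vecNorm_sub_comm {N : ℕ} (v w : Fin N → ℝ) : vecNorm (v - w) = vecNorm (w - v) := by
  rw [vecNorm_eq_norm_toLp, vecNorm_eq_norm_toLp, WithLp.toLp_sub, WithLp.toLp_sub, norm_sub_rev]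

lemma dotProduct_self_eq_vecNorm_sq {N : ℕ} (v : Fin N → ℝ) : v ⬝ᵥ v = vecNorm v ^ 2 := by
  rw [vecNorm, Real.sq_sqrt (by positivity)]
  simp [dotProduct, sq]

lemma abs_dotProduct_le_vecNorm_mul {N : ℕ} (v w : Fin N → ℝ) :
    |v ⬝ᵥ w| ≤ vecNorm v * vecNorm w := by
  rw [vecNorm_eq_norm_toLp, vecNorm_eq_norm_toLp]
  convert abs_real_inner_le_norm (WithLp.toLp 2 v) (WithLp.toLp 2 w) using 2
  simp [dotProduct, PiLp.inner_apply, mul_comm]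

lemma opNorm_nonneg {N : ℕ} (A : Matrix (Fin N) (Fin N) ℝ) : 0 ≤ opNorm A := norm_nonneg _

lemma opNorm_sub_comm {N : ℕ} (A B : Matrix (Fin N) (Fin N) ℝ) :
    opNorm (A - B) = opNorm (B - A) := by
  rw [opNorm, opNorm, map_sub, map_sub, norm_sub_rev]

lemma vecNorm_mulVec_le {N : ℕ} (A : Matrix (Fin N) (Fin N) ℝ) (v : Fin N → ℝ) :
    vecNorm (A *ᵥ v) ≤ opNorm A * vecNorm v := by
  simpa only [vecNorm_eq_norm_toLp, opNorm, toEuclideanCLM_toLp] using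
    (toEuclideanCLM (𝕜 := ℝ) A).le_opNorm (WithLp.toLp 2 v)

namespace Matrix.PosSemidef

variable {N : ℕ} {M : Matrix (Fin N) (Fin N) ℝ}

lemma mul_vecNorm_le_vecNorm_add_smul_one_mulVec (hM : M.PosSemidef) (c : ℝ)
    (v : Fin N → ℝ) : c * vecNorm v ≤ vecNorm ((M + c • 1) *ᵥ v) := by
  rcases (vecNorm_nonneg v).eq_or_lt with hv | hv
  · rw [← hv, mul_zero]
    exact vecNorm_nonneg _
  refine le_of_mul_le_mul_right ?_ hv
  calc c * vecNorm v * vecNorm v = c * (v ⬝ᵥ v) := by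
        rw [dotProduct_self_eq_vecNorm_sq]; ring
    _ ≤ v ⬝ᵥ (M *ᵥ v) + c * (v ⬝ᵥ v) :=
        le_add_of_nonneg_left (by simpa using hM.dotProduct_mulVec_nonneg v)
    _ = v ⬝ᵥ ((M + c • 1) *ᵥ v) := by
        rw [add_mulVec, smul_mulVec, one_mulVec, dotProduct_add, dotProduct_smul, smul_eq_mul]
    _ ≤ vecNorm ((M + c • 1) *ᵥ v) * vecNorm v := by
        rw [mul_comm]
        exact (le_abs_self _).trans (abs_dotProduct_le_vecNorm_mul _ _)

lemma vecNorm_le_div_of_add_smul_one_mulVec_eq (hM : M.PosSemidef) {c : ℝ} (hc : 0 < c)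
    {v w : Fin N → ℝ} (h : (M + c • 1) *ᵥ v = w) : vecNorm v ≤ vecNorm w / c := by
  rw [le_div_iff₀' hc, ← h]
  exact hM.mul_vecNorm_le_vecNorm_add_smul_one_mulVec c v

end Matrix.PosSemidef

section RegularizedSystems

variable {N : ℕ} {K K' : Matrix (Fin N) (Fin N) ℝ} {c : ℝ} {y α α' : Fin N → ℝ}

lemma mulVec_sub_mulVec_of_add_smul_one_mulVec_eq (hα : (K + c • 1) *ᵥ α = y)
    (hα' : (K' + c • 1) *ᵥ α' = y) : K' *ᵥ α' - K *ᵥ α = c • (α - α') := by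
  rw [add_mulVec, smul_mulVec, one_mulVec] at hα hα'
  rw [smul_sub, eq_sub_of_add_eq hα, eq_sub_of_add_eq hα']
  abel

lemma add_smul_one_mulVec_sub_of_add_smul_one_mulVec_eq (hα : (K + c • 1) *ᵥ α = y)
    (hα' : (K' + c • 1) *ᵥ α' = y) : (K' + c • 1) *ᵥ (α' - α) = (K - K') *ᵥ α := by
  rw [mulVec_sub, hα', ← hα, sub_mulVec, add_mulVec, add_mulVec]
  abel

lemma vecNorm_sub_le_of_add_smul_one_mulVec_eq (hK : K.PosSemidef) (hK' : K'.PosSemidef)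
    (hc : 0 < c) (hα : (K + c • 1) *ᵥ α = y) (hα' : (K' + c • 1) *ᵥ α' = y) :
    vecNorm (α' - α) ≤ opNorm (K' - K) * vecNorm y / c ^ 2 := by
  calc vecNorm (α' - α) ≤ vecNorm ((K - K') *ᵥ α) / c :=
        hK'.vecNorm_le_div_of_add_smul_one_mulVec_eq hc
          (add_smul_one_mulVec_sub_of_add_smul_one_mulVec_eq hα hα')
    _ ≤ opNorm (K' - K) * vecNorm α / c := by
        rw [opNorm_sub_comm]
        gcongr
        exact vecNorm_mulVec_le _ _
    _ ≤ opNorm (K' - K) * (vecNorm y / c) / c := by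
        gcongr
        · exact opNorm_nonneg _
        · exact hK.vecNorm_le_div_of_add_smul_one_mulVec_eq hc hα
    _ = opNorm (K' - K) * vecNorm y / c ^ 2 := by ring

lemma vecNorm_mulVec_sub_mulVec_le (hK : K.PosSemidef) (hK' : K'.PosSemidef) (hc : 0 < c)
    (hα : (K + c • 1) *ᵥ α = y) (hα' : (K' + c • 1) *ᵥ α' = y) :
    vecNorm (K' *ᵥ α' - K *ᵥ α) ≤ opNorm (K' - K) / c * vecNorm y := by
  rw [mulVec_sub_mulVec_of_add_smul_one_mulVec_eq hα hα', vecNorm_smul, abs_of_pos hc,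
    vecNorm_sub_comm]
  calc c * vecNorm (α' - α) ≤ c * (opNorm (K' - K) * vecNorm y / c ^ 2) := by
        gcongr
        exact vecNorm_sub_le_of_add_smul_one_mulVec_eq hK hK' hc hα hα'
    _ = opNorm (K' - K) / c * vecNorm y := by field_simp

lemma abs_dotProduct_sub_dotProduct_le (hK : K.PosSemidef) (hK' : K'.PosSemidef) (hc : 0 < c)
    (hα : (K + c • 1) *ᵥ α = y) (hα' : (K' + c • 1) *ᵥ α' = y) (k k' : Fin N → ℝ) :
    |k' ⬝ᵥ α' - k ⬝ᵥ α|
      ≤ vecNorm (k' - k) * (vecNorm y / c) + vecNorm k * (opNorm (K' - K) * vecNorm y / c ^ 2) := by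
  have split : k' ⬝ᵥ α' - k ⬝ᵥ α = (k' - k) ⬝ᵥ α' + k ⬝ᵥ (α' - α) := by
    rw [sub_dotProduct, dotProduct_sub]
    ring
  calc |k' ⬝ᵥ α' - k ⬝ᵥ α| ≤ |(k' - k) ⬝ᵥ α'| + |k ⬝ᵥ (α' - α)| := split ▸ abs_add_le _ _
    _ ≤ vecNorm (k' - k) * vecNorm α' + vecNorm k * vecNorm (α' - α) :=
        add_le_add (abs_dotProduct_le_vecNorm_mul _ _) (abs_dotProduct_le_vecNorm_mul _ _)
    _ ≤ _ := by
        gcongr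
        · exact vecNorm_nonneg _
        · exact hK'.vecNorm_le_div_of_add_smul_one_mulVec_eq hc hα'
        · exact vecNorm_nonneg _
        · exact vecNorm_sub_le_of_add_smul_one_mulVec_eq hK hK' hc hα hα'

end RegularizedSystems

theorem stmt_12_general (N : ℕ) (y : Fin N → ℝ)
    (K Ktil : Matrix (Fin N) (Fin N) ℝ)
    (hK : K.PosSemidef) (hKt : Ktil.PosSemidef)
    (ε : ℝ) (hKKt : opNorm (Ktil - K) ≤ N * ε)
    (σ : ℝ) (hσ : 0 < σ) (α αt : Fin N → ℝ)
    (hα : (K + σ ^ 2 • 1).mulVec α = y) (hαt : (Ktil + σ ^ 2 • 1).mulVec αt = y) :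
    vecNorm (Ktil.mulVec αt - K.mulVec α) / vecNorm y ≤ N / σ ^ 2 * ε ∧
    ∀ kx ktx : Fin N → ℝ, vecNorm kx ≤ Real.sqrt N → vecNorm (ktx - kx) ≤ Real.sqrt N * ε →
      |dotProduct ktx αt - dotProduct kx α| / (vecNorm y / Real.sqrt N)
        ≤ ((N : ℝ) ^ 2 / σ ^ 4 + N / σ ^ 2) * ε := by
  have hc : 0 < σ ^ 2 := by positivity
  have hNε : 0 ≤ N * ε := (opNorm_nonneg _).trans hKKt
  constructor
  · refine div_le_of_le_mul₀ (vecNorm_nonneg y)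
      (by rw [div_mul_eq_mul_div]; exact div_nonneg hNε hc.le) ?_
    calc _ ≤ opNorm (Ktil - K) / σ ^ 2 * vecNorm y :=
          vecNorm_mulVec_sub_mulVec_le hK hKt hc hα hαt
      _ ≤ N * ε / σ ^ 2 * vecNorm y := by gcongr; exact vecNorm_nonneg y
      _ = N / σ ^ 2 * ε * vecNorm y := by ring
  · intro kx ktx hkx hktx
    have hcoef : ((N : ℝ) ^ 2 / σ ^ 4 + N / σ ^ 2) * ε = (N / σ ^ 4 + 1 / σ ^ 2) * (N * ε) := by
      ring
    refine div_le_of_le_mul₀ (div_nonneg (vecNorm_nonneg y) (Real.sqrt_nonneg _))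
      (hcoef ▸ mul_nonneg (by positivity) hNε) ?_
    calc _ ≤ vecNorm (ktx - kx) * (vecNorm y / σ ^ 2)
            + vecNorm kx * (opNorm (Ktil - K) * vecNorm y / (σ ^ 2) ^ 2) :=
          abs_dotProduct_sub_dotProduct_le hK hKt hc hα hαt kx ktx
      _ ≤ Real.sqrt N * ε * (vecNorm y / σ ^ 2)
            + Real.sqrt N * (N * ε * vecNorm y / (σ ^ 2) ^ 2) := by
          have := vecNorm_nonneg y
          have := opNorm_nonneg (Ktil - K)
          gcongr
      _ = _ := by
          -- `√N = N / √N` also holds for `N = 0`, where both sides vanish.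
          linear_combination (ε * vecNorm y / σ ^ 2 + N * ε * vecNorm y / σ ^ 4) *
            (Real.div_sqrt (x := N)).symm

theorem stmt_12 (N : ℕ) (y : Fin N → ℝ) (hy : y ≠ 0)
    (K Ktil : Matrix (Fin N) (Fin N) ℝ)
    (hK : K.PosSemidef) (hKt : Ktil.PosSemidef)
    (ε : ℝ) (hε : 0 < ε) (hKKt : opNorm (Ktil - K) ≤ N * ε)
    (σ : ℝ) (hσ : 0 < σ) (α αt : Fin N → ℝ)
    (hα : (K + σ ^ 2 • 1).mulVec α = y) (hαt : (Ktil + σ ^ 2 • 1).mulVec αt = y) :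
    vecNorm (Ktil.mulVec αt - K.mulVec α) / vecNorm y ≤ N / σ ^ 2 * ε ∧
    ∀ kx ktx : Fin N → ℝ, vecNorm kx ≤ Real.sqrt N → vecNorm (ktx - kx) ≤ Real.sqrt N * ε →
      |dotProduct ktx αt - dotProduct kx α| / (vecNorm y / Real.sqrt N)
        ≤ ((N : ℝ) ^ 2 / σ ^ 4 + N / σ ^ 2) * ε :=
  stmt_12_general N y K Ktil hK hKt ε hKKt σ hσ α αt hα hαt
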